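/- Let A, B ∈ B(H) with AB = BA, and let α ≥ 0, β > 0. Then ‖AB‖_{α,β} ≤ √( 4α/(α+β)² + 1/β ) · ‖A‖_{α,β} · ‖B‖_{α,β}. -/

import Mathlib

open ContinuousLinearMap

variable {H : Type*} [NormedAddCommGroup H] [InnerProductSpace ℂ H] [CompleteSpace H]

/-- The numerical radius `w(T) = sup {|⟨Tx,x⟩| : ‖x‖ = 1}`. -/
noncomputable def numRad (T : H →L[ℂ] H) : ℝ :=
  sSup {r : ℝ | ∃ x : H, ‖x‖ = 1 ∧ r = ‖(inner ℂ (T x) x : ℂ)‖}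

/-- The `(α,β)`-norm `‖T‖_{α,β} = sup {√(α|⟨Tx,x⟩|² + β‖Tx‖²) : ‖x‖ = 1}`. -/
noncomputable def abNorm (α β : ℝ) (T : H →L[ℂ] H) : ℝ :=
  sSup {r : ℝ | ∃ x : H, ‖x‖ = 1 ∧
    r = Real.sqrt (α * ‖(inner ℂ (T x) x : ℂ)‖ ^ 2 + β * ‖T x‖ ^ 2)}

/-!
For commuting `A` and `B`, `4AB = (A + B)² - (A - B)²`, so the power inequality `w(T²) ≤ w(T)²`
gives `w(AB) ≤ (w(A) + w(B))² / 2`, and rescaling `A` and `B` to numerical radius one turns this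
into `w(AB) ≤ 2 w(A) w(B)`. The power inequality comes from comparing `⟨T(x ± tTx), x ± tTx⟩`
after rotating `T` by a unimodular scalar so that `⟨T²x, x⟩ ≥ 0`, and taking `t = 1 / w(T)`.
On the other side, `‖T‖²_{α,β} ≤ α w(T)² + β ‖T‖²`, while `(α + β) w(T)² ≤ ‖T‖²_{α,β}` and
`β ‖T‖² ≤ ‖T‖²_{α,β}`; so the two summands of `‖AB‖²_{α,β}` are at most `4α/(α+β)²` and `1/β`
times `‖A‖²_{α,β} ‖B‖²_{α,β}`.
-/

open scoped InnerProductSpace ComplexConjugate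

lemma le_sq_of_forall_mul_add_le {p r w : ℝ} (hp : 0 ≤ p) (hw : 0 ≤ w)
    (h : ∀ t : ℝ, t * (p + r) ≤ w * (1 + t ^ 2 * p)) : r ≤ w ^ 2 := by
  rcases hw.eq_or_lt with rfl | hw
  · nlinarith [h 1]
  · have := h w⁻¹
    field_simp at this
    nlinarith

lemma Complex.exists_norm_eq_one_conj_sq_mul_eq_norm (a : ℂ) :
    ∃ c : ℂ, ‖c‖ = 1 ∧ conj c ^ 2 * a = ‖a‖ := by
  refine ⟨Complex.exp (↑(a.arg / 2) * Complex.I), Complex.norm_exp_ofReal_mul_I _, ?_⟩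
  nth_rewrite 2 [← Complex.norm_mul_exp_arg_mul_I a]
  rw [← Complex.exp_conj, ← Complex.exp_nat_mul, mul_left_comm, ← Complex.exp_add, map_mul,
    Complex.conj_ofReal, Complex.conj_I]
  push_cast
  ring_nf
  rw [Complex.exp_zero, mul_one]

section

variable {E : Type*} [NormedAddCommGroup E] [InnerProductSpace ℂ E]

lemma numRad_nonneg (T : E →L[ℂ] E) : 0 ≤ numRad T :=
  Real.sSup_nonneg <| by rintro _ ⟨x, -, rfl⟩; positivity

lemma numRad_le {T : E →L[ℂ] E} {c : ℝ} (hc : 0 ≤ c)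
    (h : ∀ x : E, ‖x‖ = 1 → ‖⟪T x, x⟫_ℂ‖ ≤ c) : numRad T ≤ c :=
  Real.sSup_le (by rintro _ ⟨x, hx, rfl⟩; exact h x hx) hc

lemma norm_inner_le_of_norm_eq_one (y : E) {x : E} (hx : ‖x‖ = 1) : ‖⟪y, x⟫_ℂ‖ ≤ ‖y‖ := by
  simpa [hx] using norm_inner_le_norm (𝕜 := ℂ) y x

lemma norm_inner_le_numRad (T : E →L[ℂ] E) {x : E} (hx : ‖x‖ = 1) :
    ‖⟪T x, x⟫_ℂ‖ ≤ numRad T := by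
  refine le_csSup ⟨‖T‖, ?_⟩ ⟨x, hx, rfl⟩
  rintro _ ⟨y, hy, rfl⟩
  exact (norm_inner_le_of_norm_eq_one _ hy).trans (T.le_opNorm_of_le hy.le |>.trans_eq (mul_one _))

lemma norm_inner_le_numRad_mul_sq (T : E →L[ℂ] E) (u : E) :
    ‖⟪T u, u⟫_ℂ‖ ≤ numRad T * ‖u‖ ^ 2 := by
  rcases eq_or_ne u 0 with rfl | hu
  · simp
  have hu' : (‖u‖ : ℂ) ≠ 0 := by exact_mod_cast norm_ne_zero_iff.2 hu
  set x := (‖u‖⁻¹ : ℂ) • u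
  have hx : ‖x‖ = 1 := by
    rw [norm_smul, norm_inv, Complex.norm_real, norm_norm, inv_mul_cancel₀ (norm_ne_zero_iff.2 hu)]
  have hux : u = (‖u‖ : ℂ) • x := by rw [smul_smul, mul_inv_cancel₀ hu', one_smul]
  have hu2 : ‖⟪T u, u⟫_ℂ‖ = ‖⟪T x, x⟫_ℂ‖ * ‖u‖ ^ 2 := by
    conv_lhs => rw [hux, map_smul, inner_smul_left, inner_smul_right, norm_mul, norm_mul]
    simp only [Complex.norm_conj, Complex.norm_real, norm_norm]
    ring
  rw [hu2]
  gcongr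
  exact norm_inner_le_numRad T hx

lemma abs_re_inner_le_numRad_mul_sq (T : E →L[ℂ] E) (u : E) :
    |(⟪T u, u⟫_ℂ).re| ≤ numRad T * ‖u‖ ^ 2 :=
  (Complex.abs_re_le_norm _).trans (norm_inner_le_numRad_mul_sq T u)

lemma numRad_add_le (A B : E →L[ℂ] E) : numRad (A + B) ≤ numRad A + numRad B :=
  numRad_le (add_nonneg (numRad_nonneg A) (numRad_nonneg B)) fun x hx => by
    rw [add_apply, inner_add_left]
    exact (norm_add_le _ _).trans
      (add_le_add (norm_inner_le_numRad A hx) (norm_inner_le_numRad B hx))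

lemma numRad_sub_le (A B : E →L[ℂ] E) : numRad (A - B) ≤ numRad A + numRad B :=
  numRad_le (add_nonneg (numRad_nonneg A) (numRad_nonneg B)) fun x hx => by
    rw [sub_apply, inner_sub_left]
    exact (norm_sub_le _ _).trans
      (add_le_add (norm_inner_le_numRad A hx) (norm_inner_le_numRad B hx))

lemma numRad_smul_le (c : ℂ) (T : E →L[ℂ] E) : numRad (c • T) ≤ ‖c‖ * numRad T :=
  numRad_le (by have := numRad_nonneg T; positivity) fun x hx => by
    rw [smul_apply, inner_smul_left, norm_mul, Complex.norm_conj]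
    exact mul_le_mul_of_nonneg_left (norm_inner_le_numRad T hx) (norm_nonneg c)

lemma numRad_smul (c : ℂ) (T : E →L[ℂ] E) : numRad (c • T) = ‖c‖ * numRad T := by
  refine (numRad_smul_le c T).antisymm ?_
  rcases eq_or_ne c 0 with rfl | hc
  · simpa using numRad_nonneg _
  calc ‖c‖ * numRad T = ‖c‖ * numRad (c⁻¹ • c • T) := by rw [inv_smul_smul₀ hc]
    _ ≤ ‖c‖ * (‖c⁻¹‖ * numRad (c • T)) := by gcongr; exact numRad_smul_le _ _
    _ = numRad (c • T) := by rw [norm_inv, mul_inv_cancel_left₀ (norm_ne_zero_iff.2 hc)]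

lemma numRad_eq_zero {T : E →L[ℂ] E} : numRad T = 0 ↔ T = 0 := by
  refine ⟨fun h => ?_, fun h => ?_⟩
  · have hT : ∀ u, ⟪T u, u⟫_ℂ = 0 := fun u => by
      simpa [h] using norm_inner_le_numRad_mul_sq T u
    exact coe_inj.1 <| (inner_map_self_eq_zero (T : E →ₗ[ℂ] E)).1 hT
  · exact (numRad_nonneg T).antisymm' (numRad_le le_rfl fun x _ => by simp [h])

lemma re_inner_apply_apply_le_numRad_sq (T : E →L[ℂ] E) {x : E} (hx : ‖x‖ = 1) :
    (⟪T (T x), x⟫_ℂ).re ≤ numRad T ^ 2 := by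
  refine le_sq_of_forall_mul_add_le (sq_nonneg ‖T x‖) (numRad_nonneg T) fun t => ?_
  set y := (t : ℂ) • T x
  have hdiff : (⟪T (x + y), x + y⟫_ℂ).re - (⟪T (x - y), x - y⟫_ℂ).re =
      2 * (t * (‖T x‖ ^ 2 + (⟪T (T x), x⟫_ℂ).re)) := by
    have : ⟪T (x + y), x + y⟫_ℂ - ⟪T (x - y), x - y⟫_ℂ = 2 * (⟪T x, y⟫_ℂ + ⟪T y, x⟫_ℂ) := by
      simp only [map_add, map_sub, inner_add_left, inner_add_right, inner_sub_left, inner_sub_right]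
      ring
    rw [← Complex.sub_re, this]
    simp only [y, map_smul, inner_smul_left, inner_smul_right, Complex.conj_ofReal,
      inner_self_eq_norm_sq_to_K]
    simp [← Complex.ofReal_pow, mul_add]
  have hpar : ‖x + y‖ ^ 2 + ‖x - y‖ ^ 2 = 2 * (1 + t ^ 2 * ‖T x‖ ^ 2) := by
    rw [parallelogram_law_with_norm ℂ, hx, norm_smul, Complex.norm_real, Real.norm_eq_abs, mul_pow,
      sq_abs]
    ring
  have h₁ := (abs_le.1 (abs_re_inner_le_numRad_mul_sq T (x + y))).2
  have h₂ := (abs_le.1 (abs_re_inner_le_numRad_mul_sq T (x - y))).1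
  linear_combination (h₁ + h₂ - hdiff + numRad T * hpar) / 2

lemma numRad_mul_self_le (T : E →L[ℂ] E) : numRad (T * T) ≤ numRad T ^ 2 :=
  numRad_le (sq_nonneg _) fun x hx => by
    obtain ⟨c, hc, hca⟩ := Complex.exists_norm_eq_one_conj_sq_mul_eq_norm ⟪T (T x), x⟫_ℂ
    have hrot : ⟪(c • T) ((c • T) x), x⟫_ℂ = ‖⟪T (T x), x⟫_ℂ‖ := by
      rw [← hca, smul_apply, smul_apply, map_smul, inner_smul_left, inner_smul_left]
      ring
    have := re_inner_apply_apply_le_numRad_sq (c • T) hx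
    rwa [hrot, Complex.ofReal_re, numRad_smul, hc, one_mul] at this

lemma Commute.numRad_mul_le_add_sq {A B : E →L[ℂ] E} (hAB : Commute A B) :
    numRad (A * B) ≤ (numRad A + numRad B) ^ 2 / 2 := by
  have h4 : (A + B) * (A + B) - (A - B) * (A - B) = (4 : ℂ) • (A * B) := by
    have : (A + B) * (A + B) - (A - B) * (A - B) = 2 * (A * B) + 2 * (B * A) := by noncomm_ring
    rw [this, ← hAB.eq, ofNat_smul_eq_nsmul (R := ℂ), nsmul_eq_mul, ← add_mul]
    norm_num
  have hsum : numRad (A + B) ^ 2 ≤ (numRad A + numRad B) ^ 2 := by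
    gcongr
    exacts [numRad_nonneg _, numRad_add_le A B]
  have hdiff : numRad (A - B) ^ 2 ≤ (numRad A + numRad B) ^ 2 := by
    gcongr
    exacts [numRad_nonneg _, numRad_sub_le A B]
  calc numRad (A * B) = numRad ((4 : ℂ) • (A * B)) / 4 := by rw [numRad_smul]; norm_num
    _ = numRad ((A + B) * (A + B) - (A - B) * (A - B)) / 4 := by rw [h4]
    _ ≤ (numRad (A + B) ^ 2 + numRad (A - B) ^ 2) / 4 := by
      gcongr
      exact (numRad_sub_le _ _).trans (add_le_add (numRad_mul_self_le _) (numRad_mul_self_le _))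
    _ ≤ (numRad A + numRad B) ^ 2 / 2 := by linarith

lemma Commute.numRad_mul_le {A B : E →L[ℂ] E} (hAB : Commute A B) :
    numRad (A * B) ≤ 2 * numRad A * numRad B := by
  rcases (numRad_nonneg A).eq_or_lt with ha | ha
  · simp [numRad_eq_zero.1 ha.symm, numRad_eq_zero.2]
  rcases (numRad_nonneg B).eq_or_lt with hb | hb
  · simp [numRad_eq_zero.1 hb.symm, numRad_eq_zero.2]
  have key :=
    ((hAB.smul_left ((numRad A)⁻¹ : ℂ)).smul_right ((numRad B)⁻¹ : ℂ)).numRad_mul_le_add_sq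
  rw [numRad_smul, numRad_smul, smul_mul_smul_comm, numRad_smul] at key
  simp only [Complex.norm_mul, norm_inv, Complex.norm_real, Real.norm_eq_abs, abs_of_pos ha,
    abs_of_pos hb] at key
  field_simp at key
  linarith

lemma abNorm_nonneg (α β : ℝ) (T : E →L[ℂ] E) : 0 ≤ abNorm α β T :=
  Real.sSup_nonneg <| by rintro _ ⟨x, -, rfl⟩; positivity

lemma sq_le_abNorm_sq (α β : ℝ) (T : E →L[ℂ] E) {x : E} (hx : ‖x‖ = 1) :
    α * ‖⟪T x, x⟫_ℂ‖ ^ 2 + β * ‖T x‖ ^ 2 ≤ abNorm α β T ^ 2 := by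
  have hbdd : BddAbove {r : ℝ | ∃ x : E, ‖x‖ = 1 ∧
      r = √(α * ‖⟪T x, x⟫_ℂ‖ ^ 2 + β * ‖T x‖ ^ 2)} := by
    refine ⟨√(|α| * ‖T‖ ^ 2 + |β| * ‖T‖ ^ 2), ?_⟩
    rintro _ ⟨y, hy, rfl⟩
    have hTy : ‖T y‖ ≤ ‖T‖ := T.le_opNorm_of_le hy.le |>.trans_eq (mul_one _)
    have hr : ‖⟪T y, y⟫_ℂ‖ ≤ ‖T‖ := (norm_inner_le_of_norm_eq_one _ hy).trans hTy
    gcongr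
    exacts [le_abs_self α, le_abs_self β]
  exact (Real.sqrt_le_left (abNorm_nonneg α β T)).1 (le_csSup hbdd ⟨x, hx, rfl⟩)

lemma add_mul_numRad_sq_le_abNorm_sq {α β : ℝ} (hβ : 0 ≤ β) (hαβ : 0 < α + β)
    (T : E →L[ℂ] E) : (α + β) * numRad T ^ 2 ≤ abNorm α β T ^ 2 := by
  have h : numRad T ≤ √(abNorm α β T ^ 2 / (α + β)) :=
    numRad_le (Real.sqrt_nonneg _) fun x hx => by
      rw [Real.le_sqrt (norm_nonneg _) (by positivity), le_div_iff₀ hαβ]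
      have hr := pow_le_pow_left₀ (norm_nonneg _) (norm_inner_le_of_norm_eq_one (T x) hx) 2
      nlinarith [sq_le_abNorm_sq α β T hx]
  have := pow_le_pow_left₀ (numRad_nonneg T) h 2
  rw [Real.sq_sqrt (by positivity), le_div_iff₀ hαβ] at this
  linarith

lemma mul_opNorm_sq_le_abNorm_sq {α β : ℝ} (hα : 0 ≤ α) (hβ : 0 < β) (T : E →L[ℂ] E) :
    β * ‖T‖ ^ 2 ≤ abNorm α β T ^ 2 := by
  have h : ‖T‖ ≤ √(abNorm α β T ^ 2 / β) :=
    opNorm_le_of_unit_norm (Real.sqrt_nonneg _) fun x hx => by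
      rw [Real.le_sqrt (norm_nonneg _) (by positivity), le_div_iff₀ hβ]
      have := sq_le_abNorm_sq α β T hx
      nlinarith [sq_nonneg ‖⟪T x, x⟫_ℂ‖]
  have := pow_le_pow_left₀ (norm_nonneg T) h 2
  rw [Real.sq_sqrt (by positivity), le_div_iff₀ hβ] at this
  linarith

lemma abNorm_le_sqrt {α β : ℝ} (hα : 0 ≤ α) (hβ : 0 ≤ β) (T : E →L[ℂ] E) :
    abNorm α β T ≤ √(α * numRad T ^ 2 + β * ‖T‖ ^ 2) :=
  Real.sSup_le (s := {r : ℝ | ∃ x : E, ‖x‖ = 1 ∧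
      r = √(α * ‖⟪T x, x⟫_ℂ‖ ^ 2 + β * ‖T x‖ ^ 2)}) (by
    rintro _ ⟨x, hx, rfl⟩
    gcongr
    exacts [norm_inner_le_numRad T hx, T.le_opNorm_of_le hx.le |>.trans_eq (mul_one _)])
    (Real.sqrt_nonneg _)

lemma Commute.numRad_mul_sq_le_abNorm {A B : E →L[ℂ] E} (hAB : Commute A B) {α β : ℝ}
    (hβ : 0 ≤ β) (hαβ : 0 < α + β) :
    numRad (A * B) ^ 2 ≤ 4 / (α + β) ^ 2 * (abNorm α β A * abNorm α β B) ^ 2 :=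
  calc numRad (A * B) ^ 2 ≤ (2 * numRad A * numRad B) ^ 2 := by
        gcongr
        exacts [numRad_nonneg _, hAB.numRad_mul_le]
    _ = 4 / (α + β) ^ 2 * (((α + β) * numRad A ^ 2) * ((α + β) * numRad B ^ 2)) := by
        field_simp
        ring
    _ ≤ 4 / (α + β) ^ 2 * (abNorm α β A ^ 2 * abNorm α β B ^ 2) := by
        gcongr
        exacts [add_mul_numRad_sq_le_abNorm_sq hβ hαβ A, add_mul_numRad_sq_le_abNorm_sq hβ hαβ B]
    _ = 4 / (α + β) ^ 2 * (abNorm α β A * abNorm α β B) ^ 2 := by ring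

lemma opNorm_mul_sq_le_abNorm {α β : ℝ} (hα : 0 ≤ α) (hβ : 0 < β) (A B : E →L[ℂ] E) :
    ‖A * B‖ ^ 2 ≤ 1 / β ^ 2 * (abNorm α β A * abNorm α β B) ^ 2 :=
  calc ‖A * B‖ ^ 2 ≤ (‖A‖ * ‖B‖) ^ 2 := by gcongr; exact norm_mul_le A B
    _ = 1 / β ^ 2 * ((β * ‖A‖ ^ 2) * (β * ‖B‖ ^ 2)) := by field_simp
    _ ≤ 1 / β ^ 2 * (abNorm α β A ^ 2 * abNorm α β B ^ 2) := by
        gcongr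
        exacts [mul_opNorm_sq_le_abNorm_sq hα hβ A, mul_opNorm_sq_le_abNorm_sq hα hβ B]
    _ = 1 / β ^ 2 * (abNorm α β A * abNorm α β B) ^ 2 := by ring

end

/-- Bound for the `(α,β)`-norm of a product of commuting operators. -/
theorem abNorm_mul_le_of_comm (A B : H →L[ℂ] H) (hAB : A * B = B * A)
    (α β : ℝ) (hα : 0 ≤ α) (hβ : 0 < β) :
    abNorm α β (A * B) ≤
      Real.sqrt (4 * α / (α + β) ^ 2 + 1 / β) * abNorm α β A * abNorm α β B := by
  have hαβ : 0 < α + β := by linarith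
  have hnn : 0 ≤ abNorm α β A * abNorm α β B :=
    mul_nonneg (abNorm_nonneg _ _ A) (abNorm_nonneg _ _ B)
  have hw := Commute.numRad_mul_sq_le_abNorm hAB hβ.le hαβ
  have hn := opNorm_mul_sq_le_abNorm hα hβ A B
  calc abNorm α β (A * B) ≤ √(α * numRad (A * B) ^ 2 + β * ‖A * B‖ ^ 2) :=
        abNorm_le_sqrt hα hβ.le _
    _ ≤ √(α * (4 / (α + β) ^ 2 * (abNorm α β A * abNorm α β B) ^ 2) +
          β * (1 / β ^ 2 * (abNorm α β A * abNorm α β B) ^ 2)) := by gcongr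
    _ = √((4 * α / (α + β) ^ 2 + 1 / β) * (abNorm α β A * abNorm α β B) ^ 2) := by
        congr 1
        field_simp
    _ = √(4 * α / (α + β) ^ 2 + 1 / β) * abNorm α β A * abNorm α β B := by
        rw [Real.sqrt_mul (by positivity), Real.sqrt_sq hnn, mul_assoc]
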